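/- Let m ≥ 2 and let k, r be integers with 1 ≤ k < r. Then the number of paths of length t = 2k in the perfect unrooted m-ary tree of diameter D = 2r−1 equals (m^(2k−1)/(m−1)) · ( (m+1)·m^(r−k) − (m+1) ). -/

import Mathlib

open SimpleGraph Finset

/-- `IsPerfectUnrootedMary m d H` says that `H` is the perfect unrooted `m`-ary tree of
diameter `d`: a tree in which every vertex has degree `1` or `m + 1`, whose maximum
distance between two vertices is `d`, and in which every degree-`1` vertex is at
distance `d` from some other vertex.  (For `d = 0` the degree condition is dropped,
so that the one-vertex tree is the perfect tree of diameter `0`.) -/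
def IsPerfectUnrootedMary (m d : ℕ) {W : Type} [Fintype W] (H : SimpleGraph W)
    [DecidableRel H.Adj] : Prop :=
  H.IsTree ∧
    (0 < d → ∀ v : W, H.degree v = 1 ∨ H.degree v = m + 1) ∧
    (∀ u v : W, H.dist u v ≤ d) ∧
    (∃ u v : W, H.dist u v = d) ∧
    (∀ v : W, H.degree v = 1 → ∃ u : W, H.dist u v = d)

/-- The number of paths of length `t` in `H`, i.e. the number of unordered pairs of
vertices at distance exactly `t` from each other. -/
noncomputable def pathCount {W : Type} [Fintype W] [DecidableEq W] (H : SimpleGraph W) (t : ℕ) : ℕ :=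
  (Finset.univ.filter fun p : Sym2 W => ∃ u v : W, p = s(u, v) ∧ H.dist u v = t).card

/-!
A tree of odd diameter `2r - 1` has a central edge `c₁c₂` from which every vertex is at distance
at most `r - 1`; in the perfect `m`-ary tree every vertex closer than `r - 1` to that edge has
degree `m + 1`. A path of even length `2k` has a unique midpoint `w`, and the ordered pairs with
midpoint `w` are the pairs of vertices at distance `k` from `w` in two different branches at `w`.
If `w` is at distance at most `r - 1 - k` from the central edge, all these branches are complete
to depth `k`, giving `(m + 1) m ^ (2k - 1)` pairs; otherwise there are none, since one endpoint
would lie beyond the leaves. With `2 m ^ i` vertices at distance `i` from the central edge, the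
ordered pairs number `2 (m + 1) m ^ (2k - 1) ∑_{i < r - k} m ^ i`, twice the number of paths.
-/

namespace SimpleGraph

variable {V : Type*} {G : SimpleGraph V}

lemma Connected.exists_adj_dist_add_one (hG : G.Connected) {x u : V} (hxu : x ≠ u) :
    ∃ y, G.Adj x y ∧ G.dist u y + 1 = G.dist u x := by
  obtain ⟨p, hp⟩ := hG.exists_walk_length_eq_dist x u
  cases p with
  | nil => exact absurd rfl hxu
  | @cons _ y _ hxy q =>
    have htri : G.dist u x ≤ G.dist u y + G.dist y x := hG.dist_triangle
    rw [dist_eq_one_iff_adj.2 hxy.symm] at htri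
    exact ⟨y, hxy, by grind [dist_le q, Walk.length_cons, dist_comm]⟩

lemma Connected.exists_dist_eq_and_dist_eq (hG : G.Connected) {u v : V} {a b : ℕ}
    (huv : G.dist u v = a + b) : ∃ w, G.dist u w = a ∧ G.dist w v = b := by
  obtain ⟨p, hp⟩ := hG.exists_walk_length_eq_dist u v
  have hu := dist_le (p.take a)
  have hv := dist_le (p.drop a)
  have htri : G.dist u v ≤ G.dist u (p.getVert a) + G.dist (p.getVert a) v := hG.dist_triangle
  simp only [Walk.take_length, Walk.drop_length] at hu hv
  exact ⟨p.getVert a, by omega, by omega⟩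

lemma IsTree.length_eq_dist_of_isPath (hG : G.IsTree) {u v : V} {p : G.Walk u v}
    (hp : p.IsPath) : p.length = G.dist u v := by
  obtain ⟨q, hq, hql⟩ := hG.connected.exists_path_of_dist u v
  rw [← hql, (hG.existsUnique_path u v).unique hp hq]

lemma IsTree.eq_of_dist_add_one_eq (hG : G.IsTree) {u w y z : V} (hy : G.Adj w y)
    (hz : G.Adj w z) (hyu : G.dist u y + 1 = G.dist u w) (hzu : G.dist u z + 1 = G.dist u w) :
    y = z := by
  obtain ⟨p, hp⟩ := hG.connected.exists_walk_length_eq_dist y u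
  obtain ⟨q, hq⟩ := hG.connected.exists_walk_length_eq_dist z u
  have hpq := (hG.existsUnique_path w u).unique
    ((p.cons hy).isPath_of_length_eq_dist (by grind [Walk.length_cons, dist_comm]))
    ((q.cons hz).isPath_of_length_eq_dist (by grind [Walk.length_cons, dist_comm]))
  simpa using congrArg Walk.snd hpq

lemma IsTree.dist_eq_add_of_adj_of_adj (hG : G.IsTree) {u v w y z : V} (hy : G.Adj w y)
    (hz : G.Adj w z) (hyz : y ≠ z) (hu : G.dist u y + 1 = G.dist u w)
    (hv : G.dist v z + 1 = G.dist v w) : G.dist u v = G.dist u w + G.dist w v := by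
  obtain ⟨p, hp⟩ := hG.connected.exists_walk_length_eq_dist y u
  obtain ⟨q, hq⟩ := hG.connected.exists_walk_length_eq_dist z v
  have hpu := (p.cons hy).isPath_of_length_eq_dist (by grind [Walk.length_cons, dist_comm])
  have hqv := (q.cons hz).isPath_of_length_eq_dist (by grind [Walk.length_cons, dist_comm])
  -- The walk `u ⋯ y w z ⋯ v` never backtracks, so in an acyclic graph it is a path.
  have hpath : ((p.cons hy).reverse.append (q.cons hz)).IsPath := by
    rw [hG.isAcyclic.isPath_iff_isChain, Walk.edges_append, List.isChain_append]
    refine ⟨(hG.isAcyclic.isPath_iff_isChain _).1 hpu.reverse,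
      (hG.isAcyclic.isPath_iff_isChain _).1 hqv, ?_⟩
    simp [Walk.edges_reverse, hyz, hy.ne']
  rw [← hG.length_eq_dist_of_isPath hpath]
  grind [Walk.length_append, Walk.length_reverse, Walk.length_cons, dist_comm]

lemma IsTree.dist_eq_add_add_one_of_adj (hG : G.IsTree) {u v x w : V} (hxw : G.Adj x w)
    (hu : G.dist u x + 1 = G.dist u w) (hv : G.dist v w + 1 = G.dist v x) :
    G.dist u v = G.dist u x + 1 + G.dist w v := by
  rcases eq_or_ne x u with rfl | hxu
  · grind [dist_comm]
  obtain ⟨y, hxy, hyu⟩ := hG.connected.exists_adj_dist_add_one hxu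
  have hyw : y ≠ w := by rintro rfl; omega
  grind [hG.dist_eq_add_of_adj_of_adj hxy hxw hyw hyu hv, dist_comm]

lemma IsTree.eq_of_dist_eq_of_dist_eq (hG : G.IsTree) {u v w w' : V} {a b : ℕ}
    (huv : G.dist u v = a + b) (hw : G.dist u w = a ∧ G.dist w v = b)
    (hw' : G.dist u w' = a ∧ G.dist w' v = b) : w = w' := by
  have geodesic : ∀ x, G.dist u x = a → G.dist x v = b →
      ∃ P : G.Walk u v, P.IsPath ∧ P.getVert a = x := by
    intro x hx₁ hx₂
    obtain ⟨p, hp⟩ := hG.connected.exists_walk_length_eq_dist u x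
    obtain ⟨q, hq⟩ := hG.connected.exists_walk_length_eq_dist x v
    refine ⟨p.append q, (p.append q).isPath_of_length_eq_dist (by simp; omega), ?_⟩
    simp [Walk.getVert_append, hp, hx₁]
  obtain ⟨P, hP, rfl⟩ := geodesic w hw.1 hw.2
  obtain ⟨P', hP', rfl⟩ := geodesic w' hw'.1 hw'.2
  rw [(hG.existsUnique_path u v).unique hP hP']

section Counting

variable [Fintype V]

variable (G) in
/-- For `w` adjacent to `x`: the vertices at distance `j` from `x` in the branch at `x` that
avoids `w`. -/
noncomputable def branchSphere (w x : V) (j : ℕ) : Finset V :=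
  {u | G.dist u x = j ∧ G.dist u w = j + 1}

variable (G) in
noncomputable def midpointPairs (k : ℕ) (w : V) : Finset (V × V) :=
  {p | G.dist p.1 w = k ∧ G.dist p.2 w = k ∧ G.dist p.1 p.2 = 2 * k}

lemma IsTree.dist_eq_dist_add_or_dist_eq_dist_add (hG : G.IsTree) {k : ℕ} {u v w : V}
    (c : V) (huv : (u, v) ∈ G.midpointPairs k w) :
    G.dist u c = G.dist w c + k ∨ G.dist v c = G.dist w c + k := by
  simp only [midpointPairs, mem_filter, mem_univ, true_and] at huv
  obtain ⟨huw, hvw, huv⟩ := huv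
  rcases eq_or_ne w c with rfl | hwc
  · simp [huw]
  rcases Nat.eq_zero_or_pos k with rfl | hk
  · rw [hG.connected.dist_eq_zero_iff.1 huw]
    simp
  obtain ⟨z, hwz, hzc⟩ := hG.connected.exists_adj_dist_add_one hwc
  obtain ⟨y, hwy, hyu⟩ := hG.connected.exists_adj_dist_add_one (x := w) (u := u)
    (by rintro rfl; simp at huw; omega)
  obtain ⟨y', hwy', hy'v⟩ := hG.connected.exists_adj_dist_add_one (x := w) (u := v)
    (by rintro rfl; simp at hvw; omega)
  have hyy' : y ≠ y' := by
    rintro rfl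
    have := hG.connected.dist_triangle (u := u) (v := y) (w := v)
    rw [dist_comm (u := y)] at this
    omega
  by_cases hyz : y = z
  · right
    have := hG.dist_eq_add_of_adj_of_adj hwy' hwz (hyz ▸ hyy').symm hy'v hzc
    grind [dist_comm]
  · left
    have := hG.dist_eq_add_of_adj_of_adj hwy hwz hyz hyu hzc
    grind [dist_comm]

variable [DecidableEq V]

lemma IsTree.card_dist_eq_sum_card_midpointPairs (hG : G.IsTree) (k : ℕ) :
    #{p : V × V | G.dist p.1 p.2 = 2 * k} = ∑ w, #(G.midpointPairs k w) := by
  have hdisj : ((univ : Finset V) : Set V).PairwiseDisjoint (G.midpointPairs k) := by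
    rintro w - w' - hww'
    rw [Function.onFun, Finset.disjoint_left]
    intro ⟨u, v⟩ h h'
    simp only [midpointPairs, mem_filter, mem_univ, true_and] at h h'
    obtain ⟨huw, hvw, huv⟩ := h
    obtain ⟨huw', hvw', -⟩ := h'
    exact hww' (hG.eq_of_dist_eq_of_dist_eq (huv.trans (two_mul k))
      ⟨huw, by rwa [dist_comm]⟩ ⟨huw', by rwa [dist_comm]⟩)
  rw [← card_biUnion hdisj]
  congr 1
  ext ⟨u, v⟩
  simp only [midpointPairs, mem_biUnion, mem_filter, mem_univ, true_and]
  constructor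
  · intro huv
    obtain ⟨w, huw, hwv⟩ := hG.connected.exists_dist_eq_and_dist_eq (huv.trans (two_mul k))
    exact ⟨w, huw, by rwa [dist_comm], huv⟩
  · rintro ⟨w, -, -, huv⟩
    exact huv

variable [DecidableRel G.Adj]

lemma IsTree.branchSphere_succ (hG : G.IsTree) {w x : V} (hxw : G.Adj x w) (j : ℕ) :
    G.branchSphere w x (j + 1) =
      ((G.neighborFinset x).erase w).biUnion (G.branchSphere x · j) := by
  ext u
  simp only [branchSphere, mem_biUnion, mem_erase, mem_neighborFinset, mem_filter, mem_univ,
    true_and]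
  constructor
  · rintro ⟨hux, huw⟩
    obtain ⟨y, hxy, hyu⟩ := hG.connected.exists_adj_dist_add_one (x := x) (u := u)
      (by rintro rfl; simp at hux)
    exact ⟨y, ⟨by rintro rfl; omega, hxy⟩, by omega, hux⟩
  · rintro ⟨y, ⟨hyw, hxy⟩, huy, hux⟩
    have hw : G.dist w w + 1 = G.dist w x := by rw [dist_self, dist_eq_one_iff_adj.2 hxw.symm]
    have := hG.dist_eq_add_of_adj_of_adj (u := u) hxy hxw hyw (by omega) hw
    rw [dist_eq_one_iff_adj.2 hxw] at this
    exact ⟨hux, by omega⟩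

lemma IsTree.card_branchSphere (hG : G.IsTree) {m : ℕ} : ∀ {j : ℕ} {w x : V}, G.Adj x w →
    (∀ u, G.dist u x < j → G.degree u = m + 1) → #(G.branchSphere w x j) = m ^ j
  | 0, w, x, hxw, _ => by
    have : G.branchSphere w x 0 = {x} := by
      ext u
      simp only [branchSphere, mem_filter, mem_univ, true_and, mem_singleton,
        hG.connected.dist_eq_zero_iff]
      constructor
      · exact And.left
      · rintro rfl; simp [hxw]
    simp [this]
  | j + 1, w, x, hxw, hdeg => by
    have hdisj :
        ((G.neighborFinset x).erase w : Set V).PairwiseDisjoint (G.branchSphere x · j) := by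
      intro y hy y' hy' hyy'
      rw [Function.onFun, Finset.disjoint_left]
      simp only [mem_coe, mem_erase, mem_neighborFinset] at hy hy'
      simp only [branchSphere, mem_filter, mem_univ, true_and]
      rintro u ⟨huy, hux⟩ ⟨huy', -⟩
      exact hyy' (hG.eq_of_dist_add_one_eq (u := u) hy.2 hy'.2 (by omega) (by omega))
    have hbranch : ∀ y ∈ (G.neighborFinset x).erase w, #(G.branchSphere x y j) = m ^ j := by
      intro y hy
      rw [mem_erase, mem_neighborFinset] at hy
      refine hG.card_branchSphere hy.2.symm fun u hu => hdeg u ?_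
      have := hG.connected.dist_triangle (u := u) (v := y) (w := x)
      rw [dist_eq_one_iff_adj.2 hy.2.symm] at this
      omega
    rw [hG.branchSphere_succ hxw, card_biUnion hdisj, sum_congr rfl hbranch, sum_const,
      card_erase_of_mem (mem_neighborFinset _ _ _ |>.2 hxw), card_neighborFinset_eq_degree,
      hdeg x (by simp)]
    simp [pow_succ, mul_comm]

lemma IsTree.midpointPairs_succ (hG : G.IsTree) (k : ℕ) (w : V) :
    G.midpointPairs (k + 1) w = (G.neighborFinset w).offDiag.biUnion
      fun yz => G.branchSphere w yz.1 k ×ˢ G.branchSphere w yz.2 k := by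
  ext ⟨u, v⟩
  simp only [midpointPairs, branchSphere, mem_biUnion, mem_offDiag, mem_neighborFinset,
    mem_product, mem_filter, mem_univ, true_and, Prod.exists]
  constructor
  · rintro ⟨huw, hvw, huv⟩
    obtain ⟨y, hwy, hyu⟩ := hG.connected.exists_adj_dist_add_one (x := w) (u := u)
      (by rintro rfl; simp at huw)
    obtain ⟨z, hwz, hzv⟩ := hG.connected.exists_adj_dist_add_one (x := w) (u := v)
      (by rintro rfl; simp at hvw)
    have hyz : y ≠ z := by
      rintro rfl
      have := hG.connected.dist_triangle (u := u) (v := y) (w := v)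
      rw [dist_comm (u := y)] at this
      omega
    exact ⟨y, z, ⟨hwy, hwz, hyz⟩, ⟨by omega, huw⟩, by omega, hvw⟩
  · rintro ⟨y, z, ⟨hwy, hwz, hyz⟩, ⟨huy, huw⟩, hvz, hvw⟩
    have := hG.dist_eq_add_of_adj_of_adj (u := u) (v := v) hwy hwz hyz (by omega) (by omega)
    rw [dist_comm (u := w)] at this
    exact ⟨huw, hvw, by omega⟩

lemma IsTree.card_midpointPairs (hG : G.IsTree) {m k : ℕ} {w : V}
    (hdeg : ∀ u, G.dist u w ≤ k → G.degree u = m + 1) :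
    #(G.midpointPairs (k + 1) w) = (m + 1) * m ^ (2 * k + 1) := by
  have hdisj : ((G.neighborFinset w).offDiag : Set (V × V)).PairwiseDisjoint
      fun yz => G.branchSphere w yz.1 k ×ˢ G.branchSphere w yz.2 k := by
    rintro ⟨y, z⟩ hyz ⟨y', z'⟩ hyz' hne
    simp only [mem_coe, mem_offDiag, mem_neighborFinset] at hyz hyz'
    rw [Function.onFun, Finset.disjoint_left]
    intro ⟨u, v⟩ h h'
    dsimp only at h h'
    simp only [branchSphere, mem_product, mem_filter, mem_univ, true_and] at h h'
    obtain ⟨⟨huy, huw⟩, hvz, hvw⟩ := h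
    obtain ⟨⟨huy', -⟩, hvz', -⟩ := h'
    exact hne (Prod.ext (hG.eq_of_dist_add_one_eq (u := u) (y := y) (z := y') hyz.1 hyz'.1
      (by omega) (by omega)) (hG.eq_of_dist_add_one_eq (u := v) (y := z) (z := z') hyz.2.1
      hyz'.2.1 (by omega) (by omega)))
  have hbranch : ∀ yz ∈ (G.neighborFinset w).offDiag,
      #(G.branchSphere w yz.1 k ×ˢ G.branchSphere w yz.2 k) = m ^ k * m ^ k := by
    rintro ⟨y, z⟩ hyz
    simp only [mem_offDiag, mem_neighborFinset] at hyz
    have hdeg' : ∀ x, G.Adj w x → ∀ u, G.dist u x < k → G.degree u = m + 1 := by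
      intro x hwx u hu
      have := hG.connected.dist_triangle (u := u) (v := x) (w := w)
      rw [dist_eq_one_iff_adj.2 hwx.symm] at this
      exact hdeg u (by omega)
    rw [card_product, hG.card_branchSphere hyz.1.symm (hdeg' y hyz.1),
      hG.card_branchSphere hyz.2.1.symm (hdeg' z hyz.2.1)]
  rw [hG.midpointPairs_succ, card_biUnion hdisj, sum_congr rfl hbranch, sum_const, offDiag_card,
    card_neighborFinset_eq_degree, hdeg w (by simp), ← Nat.mul_sub_one, Nat.add_sub_cancel,
    smul_eq_mul]
  ring

end Counting

section CentralEdge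

variable (G) in
noncomputable def edgeDist (c₁ c₂ w : V) : ℕ := min (G.dist w c₁) (G.dist w c₂)

variable {c₁ c₂ : V}

lemma Connected.edgeDist_le_edgeDist_add_dist (hG : G.Connected) (c₁ c₂ u x : V) :
    G.edgeDist c₁ c₂ u ≤ G.edgeDist c₁ c₂ x + G.dist u x := by
  have h₁ : G.dist u c₁ ≤ G.dist u x + G.dist x c₁ := hG.dist_triangle
  have h₂ : G.dist u c₂ ≤ G.dist u x + G.dist x c₂ := hG.dist_triangle
  unfold edgeDist
  omega

lemma Connected.dist_le_edgeDist_add_edgeDist_add_one (hG : G.Connected) (hc : G.Adj c₁ c₂)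
    (u x : V) : G.dist u x ≤ G.edgeDist c₁ c₂ u + G.edgeDist c₁ c₂ x + 1 := by
  have h₁ : G.dist u x ≤ G.dist u c₁ + G.dist c₁ x := hG.dist_triangle
  have h₂ : G.dist u x ≤ G.dist u c₂ + G.dist c₂ x := hG.dist_triangle
  have e₁ : G.dist c₁ x = G.dist x c₁ := dist_comm
  have e₂ : G.dist c₂ x = G.dist x c₂ := dist_comm
  have := hc.diff_dist_adj (u := x)
  unfold edgeDist
  omega

lemma IsTree.exists_adj_forall_edgeDist_le (hG : G.IsTree) {h : ℕ}
    (hdiam : ∀ u v, G.dist u v ≤ 2 * h + 1) (hD : ∃ u v, G.dist u v = 2 * h + 1) :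
    ∃ c₁ c₂, G.Adj c₁ c₂ ∧ ∀ w, G.edgeDist c₁ c₂ w ≤ h := by
  obtain ⟨u₀, v₀, huv⟩ := hD
  obtain ⟨c₁, hu₁, hv₁⟩ :=
    hG.connected.exists_dist_eq_and_dist_eq (a := h) (b := h + 1) (by rw [huv]; ring)
  obtain ⟨c₂, hc, hv₂⟩ :=
    hG.connected.exists_adj_dist_add_one (x := c₁) (u := v₀) (by rintro rfl; simp at hv₁)
  have e₁ : G.dist c₁ v₀ = G.dist v₀ c₁ := dist_comm
  have e₂ : G.dist c₂ v₀ = G.dist v₀ c₂ := dist_comm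
  have hu₂ : G.dist u₀ c₁ + 1 = G.dist u₀ c₂ := by
    have := hG.connected.dist_triangle (u := u₀) (v := c₂) (w := v₀)
    have := hG.dist_eq_dist_add_one_of_adj u₀ hc
    omega
  refine ⟨c₁, c₂, hc, fun w => ?_⟩
  unfold edgeDist
  rcases hG.dist_eq_dist_add_one_of_adj w hc with hw | hw
  · have := hG.dist_eq_add_add_one_of_adj (u := w) hc.symm hw.symm hu₂
    have := hdiam w u₀
    have : G.dist c₁ u₀ = G.dist u₀ c₁ := dist_comm
    omega
  · have := hG.dist_eq_add_add_one_of_adj (u := w) hc hw.symm hv₂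
    have := hdiam w v₀
    omega

section Counting

variable [Fintype V]

lemma IsTree.midpointPairs_eq_empty (hG : G.IsTree) (hc : G.Adj c₁ c₂) {h k : ℕ}
    (hmax : ∀ u, G.edgeDist c₁ c₂ u ≤ h) {w : V} (hw : h < G.edgeDist c₁ c₂ w + k) :
    G.midpointPairs k w = ∅ := by
  -- Seen from the centre farther from `w`, one of `u`, `v` lies at distance
  -- `edgeDist w + 1 + k`, so its own `edgeDist` would exceed `h`.
  rw [eq_empty_iff_forall_notMem]
  rintro ⟨u, v⟩ huv
  have hu := hmax u
  have hv := hmax v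
  have := hc.diff_dist_adj (u := u)
  have := hc.diff_dist_adj (u := v)
  have := hG.dist_eq_dist_add_one_of_adj w hc
  have := hG.dist_eq_dist_add_or_dist_eq_dist_add c₁ huv
  have := hG.dist_eq_dist_add_or_dist_eq_dist_add c₂ huv
  unfold edgeDist at *
  omega

variable [DecidableEq V] [DecidableRel G.Adj]

lemma IsTree.card_edgeDist_eq (hG : G.IsTree) (hc : G.Adj c₁ c₂) {m i : ℕ}
    (hdeg : ∀ u, G.edgeDist c₁ c₂ u < i → G.degree u = m + 1) :
    #{w | G.edgeDist c₁ c₂ w = i} = 2 * m ^ i := by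
  have hsplit : univ.filter (G.edgeDist c₁ c₂ · = i) =
      G.branchSphere c₂ c₁ i ∪ G.branchSphere c₁ c₂ i := by
    ext w
    have := hG.dist_eq_dist_add_one_of_adj w hc
    simp only [branchSphere, mem_union, mem_filter, mem_univ, true_and]
    unfold edgeDist
    omega
  have hdisj : Disjoint (G.branchSphere c₂ c₁ i) (G.branchSphere c₁ c₂ i) := by
    rw [Finset.disjoint_left]
    simp only [branchSphere, mem_filter, mem_univ, true_and]
    omega
  rw [hsplit, card_union_of_disjoint hdisj, hG.card_branchSphere hc fun u hu => hdeg u ?_,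
    hG.card_branchSphere hc.symm fun u hu => hdeg u ?_, two_mul]
  all_goals unfold edgeDist; omega

lemma IsTree.card_edgeDist_le (hG : G.IsTree) (hc : G.Adj c₁ c₂) {m n : ℕ}
    (hdeg : ∀ u, G.edgeDist c₁ c₂ u < n → G.degree u = m + 1) :
    #{w | G.edgeDist c₁ c₂ w ≤ n} = ∑ i ∈ range (n + 1), 2 * m ^ i := by
  rw [card_eq_sum_card_fiberwise (f := G.edgeDist c₁ c₂) (t := range (n + 1))
    fun w hw => by simpa [Nat.lt_succ_iff] using hw]
  refine sum_congr rfl fun i hi => ?_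
  rw [mem_range] at hi
  rw [← hG.card_edgeDist_eq hc fun u hu => hdeg u (by omega), filter_filter]
  congr 1
  ext w
  simp only [mem_filter, mem_univ, true_and]
  omega

lemma IsTree.card_dist_eq_two_mul_succ (hG : G.IsTree) (hc : G.Adj c₁ c₂) {m h k : ℕ}
    (hkh : k < h) (hmax : ∀ w, G.edgeDist c₁ c₂ w ≤ h)
    (hint : ∀ x, G.edgeDist c₁ c₂ x < h → G.degree x = m + 1) :
    #{p : V × V | G.dist p.1 p.2 = 2 * (k + 1)} =
      (m + 1) * m ^ (2 * k + 1) * ∑ i ∈ range (h - k), 2 * m ^ i := by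
  have hmid : ∀ w, #(G.midpointPairs (k + 1) w) =
      if G.edgeDist c₁ c₂ w ≤ h - (k + 1) then (m + 1) * m ^ (2 * k + 1) else 0 := by
    intro w
    split_ifs with hw
    · refine hG.card_midpointPairs fun u hu => hint u ?_
      have := hG.connected.edgeDist_le_edgeDist_add_dist c₁ c₂ u w
      omega
    · rw [hG.midpointPairs_eq_empty hc hmax (by omega), card_empty]
  rw [hG.card_dist_eq_sum_card_midpointPairs, sum_congr rfl fun w _ => hmid w, ← sum_filter,
    sum_const, smul_eq_mul, mul_comm, hG.card_edgeDist_le hc fun x hx => hint x (by omega),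
    show h - (k + 1) + 1 = h - k by omega]

end Counting

end CentralEdge

end SimpleGraph

lemma two_mul_pathCount {W : Type} [Fintype W] [DecidableEq W] (G : SimpleGraph W) {t : ℕ}
    (ht : t ≠ 0) : 2 * pathCount G t = #{p : W × W | G.dist p.1 p.2 = t} := by
  classical
  let H := SimpleGraph.fromRel fun u v : W => G.dist u v = t
  have hH : ∀ u v, H.Adj u v ↔ G.dist u v = t := by
    intro u v
    simp only [H, fromRel_adj, dist_comm (u := v), or_self, ne_eq, and_iff_right_iff_imp]
    rintro h rfl
    simp at h
    omega
  have : pathCount G t = #H.edgeFinset := by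
    unfold pathCount
    congr 1
    ext z
    induction z using Sym2.ind with
    | _ a b =>
      simp only [mem_filter, mem_univ, true_and, mem_edgeFinset, mem_edgeSet, hH]
      constructor
      · rintro ⟨u, v, huv, h⟩
        rcases Sym2.eq_iff.1 huv with ⟨rfl, rfl⟩ | ⟨rfl, rfl⟩
        · exact h
        · rwa [dist_comm]
      · exact fun h => ⟨a, b, rfl, h⟩
  rw [this, two_mul_card_edgeFinset]
  simp [hH]

lemma IsPerfectUnrootedMary.degree_eq_of_edgeDist_lt {m h : ℕ} {W : Type} [Fintype W]
    {G : SimpleGraph W} [DecidableRel G.Adj] (hG : IsPerfectUnrootedMary m (2 * h + 1) G)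
    {c₁ c₂ : W} (hc : G.Adj c₁ c₂) (hmax : ∀ w, G.edgeDist c₁ c₂ w ≤ h) {x : W}
    (hx : G.edgeDist c₁ c₂ x < h) : G.degree x = m + 1 := by
  obtain ⟨hT, hdeg, -, -, hleaf⟩ := hG
  refine (hdeg (by omega) x).resolve_left fun hx₁ => ?_
  obtain ⟨u, hu⟩ := hleaf x hx₁
  have := hT.connected.dist_le_edgeDist_add_edgeDist_add_one hc u x
  have := hmax u
  omega

theorem unrooted_oddD_even_paths (m k r : ℕ) (hm : 2 ≤ m)
    (hk : 1 ≤ k) (hkr : k < r)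
    {W : Type} [Fintype W] [DecidableEq W] (G : SimpleGraph W) [DecidableRel G.Adj]
    (hG : IsPerfectUnrootedMary m (2 * r - 1) G) :
    (pathCount G (2 * k) : ℚ) =
      (m : ℚ) ^ (2 * k - 1) / ((m : ℚ) - 1) *
        (((m : ℚ) + 1) * (m : ℚ) ^ (r - k) - ((m : ℚ) + 1)) := by
  obtain ⟨k, rfl⟩ : ∃ j, k = j + 1 := ⟨k - 1, by omega⟩
  obtain ⟨h, rfl⟩ : ∃ h, r = h + 1 := ⟨r - 1, by omega⟩
  rw [show 2 * (h + 1) - 1 = 2 * h + 1 by omega] at hG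
  obtain ⟨c₁, c₂, hc, hmax⟩ := hG.1.exists_adj_forall_edgeDist_le hG.2.2.1 hG.2.2.2.1
  have hcount := hG.1.card_dist_eq_two_mul_succ hc (by omega : k < h) hmax
    fun x => hG.degree_eq_of_edgeDist_lt hc hmax
  rw [← two_mul_pathCount G (by omega)] at hcount
  have hm₁ : (m : ℚ) ≠ 1 := by exact_mod_cast (by omega : m ≠ 1)
  have hq : (pathCount G (2 * (k + 1)) : ℚ) =
      ((m : ℚ) + 1) * (m : ℚ) ^ (2 * k + 1) * ∑ i ∈ range (h - k), (m : ℚ) ^ i := by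
    have := congrArg (Nat.cast : ℕ → ℚ) hcount
    push_cast at this
    rw [← mul_sum] at this
    linarith
  rw [hq, geom_sum_eq hm₁, show 2 * (k + 1) - 1 = 2 * k + 1 by omega,
    show h + 1 - (k + 1) = h - k by omega]
  field_simp [sub_ne_zero.2 hm₁]
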